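/- Set n_k = k^{2k}, v_k = n_{k+1} − n_k, and u_k = (4 log₂(v_k) / (n_{k+1} a_{n_{k+1}}))^{1/2}. Assume (a_n) are positive reals with n a_n nondecreasing to ∞, a_n nonincreasing to 0, and n a_n/(log₂ n)^{7/3} → ∞. Let R_k have Poisson distribution with mean v_k a_{n_{k+1}}, and define c_k = P( R_k < (1 − u_k) v_k a_{n_{k+1}} ) and b_k = P( R_k > (1 + u_k) v_k a_{n_{k+1}} ). Then Σ_k c_k < ∞ and Σ_k b_k < ∞; in fact, for all sufficiently large k, c_k ≤ exp(−2 log₂ n_k). -/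

import Mathlib

open MeasureTheory ProbabilityTheory Filter

/-- `llog u = log (log (u ⊔ e))`. -/
noncomputable def llog (x : ℝ) : ℝ := Real.log (Real.log (max x (Real.exp 1)))

/-- Sup-norm over `[0,1]`. -/
noncomputable def supNorm (f : ℝ → ℝ) : ℝ := ⨆ t : Set.Icc (0:ℝ) 1, |f t|

/-- Membership in the Strassen set `S₁`. -/
def InStrassen1 (f : ℝ → ℝ) : Prop :=
  ∃ f' : ℝ → ℝ, Measurable f' ∧
    (∀ x ∈ Set.Icc (0:ℝ) 1, f x = ∫ t in (0:ℝ)..x, f' t) ∧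
    (∫ t in (0:ℝ)..1, (f' t) ^ 2) ≤ 1

/-- Membership in `S₂ = {f ∈ S₁ : f 1 = 0}`. -/
def InStrassen2 (f : ℝ → ℝ) : Prop := InStrassen1 f ∧ f 1 = 0

variable {Ω : Type*} [MeasurableSpace Ω]

/-- Empirical distribution function `F_n`. -/
noncomputable def empF (U : ℕ → Ω → ℝ) (n : ℕ) (t : ℝ) (ω : Ω) : ℝ :=
  (Set.ncard {i : ℕ | i < n ∧ U i ω ≤ t} : ℝ) / n

/-- Uniform empirical process `α_n(t) = √n (F_n(t) - t)`. -/
noncomputable def empProc (U : ℕ → Ω → ℝ) (n : ℕ) (t : ℝ) (ω : Ω) : ℝ :=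
  Real.sqrt n * (empF U n t ω - t)

/-- `H_n(t) = n (F_n(t) - t)`. -/
noncomputable def empH (U : ℕ → Ω → ℝ) (n : ℕ) (t : ℝ) (ω : Ω) : ℝ :=
  (n : ℝ) * (empF U n t ω - t)

/-- The generalized inverse `F_n⁻¹(t) = inf {u : F_n(u) ≥ t}`. -/
noncomputable def empQF (U : ℕ → Ω → ℝ) (n : ℕ) (t : ℝ) (ω : Ω) : ℝ :=
  sInf {u : ℝ | t ≤ empF U n u ω}

/-- Uniform quantile process `β_n(t) = √n (F_n⁻¹(t) - t)`. -/
noncomputable def quantProc (U : ℕ → Ω → ℝ) (n : ℕ) (t : ℝ) (ω : Ω) : ℝ :=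
  Real.sqrt n * (empQF U n t ω - t)

/-- `(U_i)` are i.i.d. uniform on `[0,1]`. -/
def IsUniformIID (μ : Measure Ω) (U : ℕ → Ω → ℝ) : Prop :=
  (∀ i, Measurable (U i)) ∧
  iIndepFun U μ ∧
  (∀ i, Measure.map (U i) μ = MeasureTheory.volume.restrict (Set.Icc (0:ℝ) 1))

/-- `n_k = k^{2k}`. -/
def nk (k : ℕ) : ℕ := k ^ (2 * k)

/-- `v_k = n_{k+1} - n_k`. -/
def vk (k : ℕ) : ℕ := nk (k + 1) - nk k

/-- The Poisson probability `P(X = l)` for a Poisson random variable with mean `m`. -/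
noncomputable def poissonProb (m : ℝ) (l : ℕ) : ℝ :=
  Real.exp (-m) * m ^ l / (Nat.factorial l)

/-- `u_k = (4 log₂ v_k / (n_{k+1} a_{n_{k+1}}))^{1/2}`. -/
noncomputable def uk (a : ℕ → ℝ) (k : ℕ) : ℝ :=
  Real.sqrt (4 * llog (vk k) / ((nk (k + 1) : ℝ) * a (nk (k + 1))))

/-!
Chernoff's bound for the Poisson law gives `c_k ≤ exp (-m_k u_k² / 2)` and, once
`u_k ≤ 1/2` (true eventually, as `n a_n ≥ 16 log₂ n` eventually), `b_k ≤ exp (-m_k u_k² / 3)`,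
where `m_k = v_k a_{n_{k+1}}` and `m_k u_k² = 4 v_k log₂ v_k / n_{k+1}`.
Since `n_{k+1} ≥ (k+1)² n_k`, `log v_k ≥ (1 + 1/k) log n_k`, so `log₂ v_k ≥ log₂ n_k + 1/(k+1)`;
together with `n_k log₂ n_k ≤ v_k / (k+1)` this gives
`v_k log₂ v_k ≥ (v_k + n_k) log₂ n_k = n_{k+1} log₂ n_k`, i.e. `m_k u_k² ≥ 4 log₂ n_k`.
Finally `exp (-p log₂ n_k) = (2k log k)^{-p} ≤ k^{-p}` is summable for `p > 1`.
-/

open Real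

lemma exp_neg_le_one_sub_add_sq_div_two {x : ℝ} (hx : 0 ≤ x) :
    exp (-x) ≤ 1 - x + x ^ 2 / 2 := by
  have hq : 1 + x + x ^ 2 / 2 ≤ exp x := quadratic_le_exp_of_nonneg hx
  have hpos : 0 < 1 - x + x ^ 2 / 2 := by nlinarith [sq_nonneg (x - 1)]
  refine le_of_mul_le_mul_right ?_ (exp_pos x)
  rw [← exp_add, neg_add_cancel, exp_zero]
  nlinarith [mul_le_mul_of_nonneg_left hq hpos.le, pow_nonneg hx 4]

lemma exp_le_one_add_add_two_thirds_mul_sq {x : ℝ} (hx₀ : 0 ≤ x) (hx : x ≤ 1 / 2) :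
    exp x ≤ 1 + x + 2 / 3 * x ^ 2 := by
  have h := exp_bound' hx₀ (by linarith) (n := 3) (by norm_num)
  norm_num [Finset.sum_range_succ, Nat.factorial] at h
  nlinarith [mul_nonneg (mul_nonneg hx₀ hx₀) (by linarith : (0 : ℝ) ≤ 3 / 4 - x)]

section Poisson

variable {m : ℝ}

lemma poissonProb_nonneg (hm : 0 ≤ m) (l : ℕ) : 0 ≤ poissonProb m l := by
  unfold poissonProb; positivity

lemma hasSum_poissonProb (hm : 0 ≤ m) : HasSum (poissonProb m) 1 :=
  hasSum_one_poissonMeasure ⟨m, hm⟩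

lemma poissonProb_mul_exp (m θ : ℝ) (l : ℕ) :
    poissonProb m l * exp (θ * l) = exp (m * (exp θ - 1)) * poissonProb (m * exp θ) l := by
  have hpow : exp θ ^ l = exp (θ * l) := by rw [← exp_nat_mul, mul_comm]
  have hsplit : exp (-m) = exp (m * (exp θ - 1)) * exp (-(m * exp θ)) := by
    rw [← exp_add]; ring_nf
  rw [poissonProb, poissonProb, mul_pow, hpow, hsplit]
  ring

lemma hasSum_poissonProb_mul_exp (hm : 0 ≤ m) (θ : ℝ) :
    HasSum (fun l : ℕ => poissonProb m l * exp (θ * l)) (exp (m * (exp θ - 1))) := by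
  simpa only [poissonProb_mul_exp, mul_one] using
    (hasSum_poissonProb (mul_nonneg hm (exp_pos θ).le)).mul_left (exp (m * (exp θ - 1)))

lemma tsum_ite_poissonProb_le (hm : 0 ≤ m) {P : ℕ → Prop} [DecidablePred P] {θ t : ℝ}
    (hP : ∀ l, P l → t ≤ θ * l) :
    ∑' l, (if P l then poissonProb m l else 0) ≤ exp (m * (exp θ - 1) - t) := by
  have hmgf := (hasSum_poissonProb_mul_exp hm θ).mul_right (exp (-t))
  have hle : ∀ l, (if P l then poissonProb m l else 0) ≤
      poissonProb m l * exp (θ * l) * exp (-t) := by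
    intro l
    split_ifs with h
    · rw [mul_assoc, ← exp_add]
      exact le_mul_of_one_le_right (poissonProb_nonneg hm l) (one_le_exp (by linarith [hP l h]))
    · exact mul_nonneg (mul_nonneg (poissonProb_nonneg hm l) (exp_pos _).le) (exp_pos _).le
  have hsum : Summable fun l => if P l then poissonProb m l else 0 :=
    hmgf.summable.of_nonneg_of_le
      (fun l => by split_ifs; exacts [poissonProb_nonneg hm l, le_rfl]) hle
  rw [sub_eq_add_neg, exp_add]
  exact hasSum_le hle hsum.hasSum hmgf

noncomputable def poissonLowerTail (m x : ℝ) : ℝ :=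
  ∑' l : ℕ, if (l : ℝ) < x then poissonProb m l else 0

noncomputable def poissonUpperTail (m x : ℝ) : ℝ :=
  ∑' l : ℕ, if x < (l : ℝ) then poissonProb m l else 0

lemma poissonLowerTail_nonneg (hm : 0 ≤ m) (x : ℝ) : 0 ≤ poissonLowerTail m x :=
  tsum_nonneg fun l => by split_ifs; exacts [poissonProb_nonneg hm l, le_rfl]

lemma poissonUpperTail_nonneg (hm : 0 ≤ m) (x : ℝ) : 0 ≤ poissonUpperTail m x :=
  tsum_nonneg fun l => by split_ifs; exacts [poissonProb_nonneg hm l, le_rfl]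

lemma poissonLowerTail_le {u : ℝ} (hm : 0 ≤ m) (hu : 0 ≤ u) :
    poissonLowerTail m ((1 - u) * m) ≤ exp (-(m * u ^ 2 / 2)) := by
  refine (tsum_ite_poissonProb_le hm (θ := -u) (t := -(u * ((1 - u) * m)))
    fun l hl => by nlinarith).trans (exp_le_exp.2 ?_)
  nlinarith [mul_le_mul_of_nonneg_left (exp_neg_le_one_sub_add_sq_div_two hu) hm]

lemma poissonUpperTail_le {u : ℝ} (hm : 0 ≤ m) (hu₀ : 0 ≤ u) (hu : u ≤ 1 / 2) :
    poissonUpperTail m ((1 + u) * m) ≤ exp (-(m * u ^ 2 / 3)) := by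
  refine (tsum_ite_poissonProb_le hm (θ := u) (t := u * ((1 + u) * m))
    fun l hl => by nlinarith).trans (exp_le_exp.2 ?_)
  nlinarith [mul_le_mul_of_nonneg_left (exp_le_one_add_add_two_thirds_mul_sq hu₀ hu) hm]

end Poisson

section LogLog

lemma one_le_log_max_exp_one (x : ℝ) : 1 ≤ log (max x (exp 1)) := by
  simpa using log_le_log (exp_pos 1) (le_max_right x (exp 1))

lemma llog_nonneg (x : ℝ) : 0 ≤ llog x :=
  log_nonneg (one_le_log_max_exp_one x)

lemma llog_mono : Monotone llog := fun x _ h =>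
  log_le_log (one_pos.trans_le (one_le_log_max_exp_one x))
    (log_le_log ((exp_pos 1).trans_le (le_max_right _ _)) (max_le_max_right _ h))

lemma llog_of_exp_one_le {x : ℝ} (hx : exp 1 ≤ x) : llog x = log (log x) := by
  rw [llog, max_eq_left hx]

lemma eventually_one_le_llog : ∀ᶠ x : ℝ in atTop, 1 ≤ llog x := by
  filter_upwards [eventually_ge_atTop (exp (exp 1))] with x hx
  have hex : exp 1 ≤ x := (exp_le_exp.2 (by linarith [add_one_le_exp (1 : ℝ)])).trans hx
  have hlog : exp 1 ≤ log x := (le_log_iff_exp_le (by linarith [exp_pos 1])).2 hx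
  rw [llog_of_exp_one_le hex, le_log_iff_exp_le (by linarith [exp_pos 1])]
  exact hlog

lemma eventually_mul_llog_le {f : ℕ → ℝ} {p : ℝ} (hp : 1 ≤ p)
    (hf : Tendsto (fun n : ℕ => f n / llog n ^ p) atTop atTop) {C : ℝ} (hC : 0 ≤ C) :
    ∀ᶠ n : ℕ in atTop, C * llog n ≤ f n := by
  filter_upwards [hf.eventually_ge_atTop C,
    tendsto_natCast_atTop_atTop.eventually eventually_one_le_llog] with n hfn hn
  calc C * llog n ≤ C * llog n ^ p := by gcongr; exact self_le_rpow_of_one_le hn hp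
    _ ≤ f n := (le_div_iff₀ (rpow_pos_of_pos (by linarith) p)).1 hfn

end LogLog

section Blocks

lemma self_le_nk (k : ℕ) : k ≤ nk k := by
  rcases Nat.eq_zero_or_pos k with rfl | hk
  · exact Nat.zero_le _
  · exact Nat.le_self_pow (by omega) k

lemma nk_succ_pos (k : ℕ) : (0 : ℝ) < nk (k + 1) := by
  exact_mod_cast (Nat.succ_pos k).trans_le (self_le_nk (k + 1))

lemma nk_mul_succ_sq_le (k : ℕ) : nk k * (k + 1) ^ 2 ≤ nk (k + 1) :=
  calc k ^ (2 * k) * (k + 1) ^ 2 ≤ (k + 1) ^ (2 * k) * (k + 1) ^ 2 := by gcongr; omega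
    _ = nk (k + 1) := by rw [nk, ← pow_add]; ring_nf

lemma nk_le_nk_succ (k : ℕ) : nk k ≤ nk (k + 1) :=
  (Nat.le_mul_of_pos_right _ (by positivity)).trans (nk_mul_succ_sq_le k)

lemma cast_vk (k : ℕ) : (vk k : ℝ) = nk (k + 1) - nk k := by
  rw [vk, Nat.cast_sub (nk_le_nk_succ k)]

lemma nk_mul_sq_le_vk (k : ℕ) : (nk k : ℝ) * k ^ 2 ≤ vk k := by
  have h : ((nk k * (k + 1) ^ 2 : ℕ) : ℝ) ≤ nk (k + 1) := by
    exact_mod_cast nk_mul_succ_sq_le k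
  push_cast at h
  rw [cast_vk]
  nlinarith [(Nat.cast_nonneg (nk k) : (0 : ℝ) ≤ nk k), (Nat.cast_nonneg k : (0 : ℝ) ≤ k)]

lemma log_nk (k : ℕ) : log (nk k) = 2 * k * log k := by
  rw [nk, Nat.cast_pow, log_pow]; push_cast; ring

variable {k : ℕ}

lemma exp_one_le_of_three_le (hk : 3 ≤ k) : exp 1 ≤ k :=
  exp_one_lt_d9.le.trans (by norm_num; linarith [show (3 : ℝ) ≤ k by exact_mod_cast hk])

lemma one_le_log_of_three_le (hk : 3 ≤ k) : 1 ≤ log k :=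
  (le_log_iff_exp_le (by positivity)).2 (exp_one_le_of_three_le hk)

lemma llog_nk (hk : 3 ≤ k) : llog (nk k) = log (2 * k * log k) := by
  rw [llog_of_exp_one_le ((exp_one_le_of_three_le hk).trans (by exact_mod_cast self_le_nk k)),
    log_nk]

lemma llog_nk_le (hk : 3 ≤ k) : llog (nk k) ≤ 3 * log k := by
  have hlog := one_le_log_of_three_le hk
  have hk3 : (3 : ℝ) ≤ k := by exact_mod_cast hk
  have hlog_le : log k ≤ k := by linarith [log_le_sub_one_of_pos (by positivity : (0 : ℝ) < k)]
  calc llog (nk k) = log (2 * k * log k) := llog_nk hk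
    _ ≤ log ((k : ℝ) ^ 3) := log_le_log (by positivity) (by
        nlinarith [mul_le_mul_of_nonneg_left hlog_le (by positivity : (0 : ℝ) ≤ 2 * k),
          mul_nonneg (sq_nonneg (k : ℝ)) (by linarith : (0 : ℝ) ≤ k - 2)])
    _ = 3 * log k := by rw [log_pow]; norm_num

lemma llog_nk_add_inv_le_llog_vk (hk : 3 ≤ k) : llog (nk k) + 1 / (k + 1) ≤ llog (vk k) := by
  have hlog := one_le_log_of_three_le hk
  set L := 2 * (k : ℝ) * log k with hL
  have hL0 : 0 < L := by positivity
  have hA : (1 : ℝ) ≤ nk k := by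
    exact_mod_cast (by omega : 1 ≤ 3).trans (hk.trans (self_le_nk k))
  have hV : (2 * k + 2) * log k ≤ log (vk k) := by
    calc (2 * k + 2) * log k = log ((nk k : ℝ) * k ^ 2) := by
          rw [log_mul (by positivity) (by positivity), log_nk, log_pow]; push_cast; ring
      _ ≤ log (vk k) := log_le_log (by positivity) (nk_mul_sq_le_vk k)
  have hratio : 1 / (k + 1) ≤ log ((2 * k + 2) * log k) - log L := by
    rw [← log_div (by positivity) hL0.ne']
    convert one_sub_inv_le_log_of_pos (x := (2 * k + 2) * log k / L) (by positivity) using 1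
    rw [hL]; field_simp; ring
  have hVe : exp 1 ≤ (vk k : ℝ) := (exp_one_le_of_three_le hk).trans
    (by nlinarith [nk_mul_sq_le_vk k, show (3 : ℝ) ≤ k by exact_mod_cast hk])
  rw [llog_nk hk, llog_of_exp_one_le hVe]
  linarith [log_le_log (by positivity) hV]

lemma exp_neg_mul_llog_nk_le {p : ℝ} (hp : 0 ≤ p) (hk : 3 ≤ k) :
    exp (-p * llog (nk k)) ≤ (k : ℝ) ^ (-p) := by
  have hlog := one_le_log_of_three_le hk
  have hA : (k : ℝ) ≤ log (nk k) := by rw [log_nk]; nlinarith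
  have hk0 : (0 : ℝ) < k := by positivity
  rw [llog_of_exp_one_le ((exp_one_le_of_three_le hk).trans (by exact_mod_cast self_le_nk k)),
    mul_comm, ← rpow_def_of_pos (hk0.trans_le hA)]
  exact rpow_le_rpow_of_nonpos hk0 hA (by linarith)

lemma summable_exp_neg_mul_llog_nk {p : ℝ} (hp : 1 < p) :
    Summable fun k => exp (-p * llog (nk k)) := by
  refine (summable_nat_rpow.2 (by linarith : -p < -1)).of_norm_bounded_eventually_nat ?_
  filter_upwards [eventually_ge_atTop 3] with k hk
  rw [norm_of_nonneg (exp_pos _).le]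
  exact exp_neg_mul_llog_nk_le (by linarith) hk

lemma nk_mul_llog_nk_le_vk_div :
    ∀ᶠ k : ℕ in atTop, (nk k : ℝ) * llog (nk k) ≤ vk k / (k + 1) := by
  filter_upwards [eventually_ge_atTop 3, tendsto_natCast_atTop_atTop.eventually
    (isLittleO_log_id_atTop.bound (by norm_num : (0 : ℝ) < 1 / 6))] with k hk hlog
  have hk1 : (1 : ℝ) ≤ k := by exact_mod_cast (by omega : 1 ≤ k)
  rw [norm_of_nonneg (zero_le_one.trans (one_le_log_of_three_le hk)), id,
    norm_of_nonneg (by positivity)] at hlog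
  rw [le_div_iff₀ (by positivity)]
  calc (nk k : ℝ) * llog (nk k) * (k + 1) ≤ nk k * (3 * log k) * (k + 1) := by
        gcongr; exact llog_nk_le hk
    _ ≤ nk k * k ^ 2 := by
        have : 3 * log k * (k + 1) ≤ (k : ℝ) ^ 2 := by nlinarith
        nlinarith [(Nat.cast_nonneg (nk k) : (0 : ℝ) ≤ nk k)]
    _ ≤ vk k := nk_mul_sq_le_vk k

lemma nk_succ_mul_llog_nk_le :
    ∀ᶠ k : ℕ in atTop, (nk (k + 1) : ℝ) * llog (nk k) ≤ vk k * llog (vk k) := by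
  filter_upwards [eventually_ge_atTop 3, nk_mul_llog_nk_le_vk_div] with k hk hA
  have hB : (nk (k + 1) : ℝ) = vk k + nk k := by rw [cast_vk]; ring
  have hV := llog_nk_add_inv_le_llog_vk hk
  calc (nk (k + 1) : ℝ) * llog (nk k) = vk k * llog (nk k) + nk k * llog (nk k) := by
        rw [hB]; ring
    _ ≤ vk k * llog (nk k) + vk k * (1 / (k + 1)) := by rw [mul_one_div]; gcongr
    _ ≤ vk k * llog (vk k) := by rw [← mul_add]; gcongr

end Blocks

section Deviation

variable {a : ℕ → ℝ} {k : ℕ}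

lemma mean_mul_uk_sq (ha : 0 < a (nk (k + 1))) :
    (vk k : ℝ) * a (nk (k + 1)) * uk a k ^ 2 = 4 * (vk k * llog (vk k)) / nk (k + 1) := by
  have hB := nk_succ_pos k
  rw [uk, sq_sqrt (div_nonneg (mul_nonneg zero_le_four (llog_nonneg _)) (by positivity))]
  field_simp

lemma four_mul_llog_nk_le_mean_mul_uk_sq (ha_pos : ∀ n, 0 < a n) :
    ∀ᶠ k : ℕ in atTop, 4 * llog (nk k) ≤ (vk k : ℝ) * a (nk (k + 1)) * uk a k ^ 2 := by
  filter_upwards [nk_succ_mul_llog_nk_le] with k hk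
  rw [mean_mul_uk_sq (ha_pos _), le_div_iff₀ (nk_succ_pos k)]
  linarith

lemma eventually_uk_le_half (ha_pos : ∀ n, 0 < a n)
    (h73 : Tendsto (fun n : ℕ => (n : ℝ) * a n / llog n ^ ((7 : ℝ) / 3)) atTop atTop) :
    ∀ᶠ k : ℕ in atTop, uk a k ≤ 1 / 2 := by
  have hB : Tendsto (fun k => nk (k + 1)) atTop atTop :=
    tendsto_atTop_mono (fun k => self_le_nk (k + 1)) (tendsto_add_atTop_nat 1)
  filter_upwards [hB.eventually (eventually_mul_llog_le (by norm_num) h73 (C := 16)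
    (by norm_num))] with k hk
  have hBa : (0 : ℝ) < nk (k + 1) * a (nk (k + 1)) :=
    mul_pos (nk_succ_pos k) (ha_pos _)
  have hV : llog (vk k) ≤ llog (nk (k + 1)) :=
    llog_mono (by exact_mod_cast Nat.sub_le _ _)
  rw [uk, sqrt_le_left (by norm_num), div_le_iff₀ hBa]
  linarith

end Deviation

open scoped Classical in
theorem statement_general (a : ℕ → ℝ) (ha_pos : ∀ n, 0 < a n)
    (h73 : Tendsto (fun n : ℕ => (n : ℝ) * a n / llog n ^ ((7:ℝ)/3)) atTop atTop)
    (c b : ℕ → ℝ)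
    (hc : ∀ k, c k = ∑' l : ℕ,
      if (l : ℝ) < (1 - uk a k) * (vk k : ℝ) * a (nk (k + 1))
        then poissonProb ((vk k : ℝ) * a (nk (k + 1))) l else 0)
    (hb : ∀ k, b k = ∑' l : ℕ,
      if (1 + uk a k) * (vk k : ℝ) * a (nk (k + 1)) < (l : ℝ)
        then poissonProb ((vk k : ℝ) * a (nk (k + 1))) l else 0) :
    Summable c ∧ Summable b ∧
      ∀ᶠ k : ℕ in atTop, c k ≤ Real.exp (-2 * llog (nk k)) := by
  have hm : ∀ k, 0 ≤ (vk k : ℝ) * a (nk (k + 1)) := fun k =>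
    mul_nonneg (Nat.cast_nonneg _) (ha_pos _).le
  have hc_tail : ∀ k, c k =
      poissonLowerTail (vk k * a (nk (k + 1))) ((1 - uk a k) * (vk k * a (nk (k + 1)))) := by
    intro k; rw [hc k, ← mul_assoc]; rfl
  have hb_tail : ∀ k, b k =
      poissonUpperTail (vk k * a (nk (k + 1))) ((1 + uk a k) * (vk k * a (nk (k + 1)))) := by
    intro k; rw [hb k, ← mul_assoc]; rfl
  have hc_le : ∀ᶠ k in atTop, c k ≤ exp (-2 * llog (nk k)) := by
    filter_upwards [four_mul_llog_nk_le_mean_mul_uk_sq ha_pos] with k hk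
    rw [hc_tail]
    exact (poissonLowerTail_le (u := uk a k) (hm k) (sqrt_nonneg _)).trans
      (exp_le_exp.2 (by linarith))
  have hb_le : ∀ᶠ k in atTop, b k ≤ exp (-(4 / 3) * llog (nk k)) := by
    filter_upwards [four_mul_llog_nk_le_mean_mul_uk_sq ha_pos, eventually_uk_le_half ha_pos h73]
      with k hk hu
    rw [hb_tail]
    exact (poissonUpperTail_le (u := uk a k) (hm k) (sqrt_nonneg _) hu).trans
      (exp_le_exp.2 (by linarith))
  refine ⟨?_, ?_, hc_le⟩
  · refine (summable_exp_neg_mul_llog_nk (p := 2) (by norm_num)).of_norm_bounded_eventually_nat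
      ?_
    filter_upwards [hc_le] with k hk
    rwa [norm_of_nonneg (hc_tail k ▸ poissonLowerTail_nonneg (hm k) _)]
  · refine (summable_exp_neg_mul_llog_nk (p := 4 / 3) (by norm_num)).of_norm_bounded_eventually_nat
      ?_
    filter_upwards [hb_le] with k hk
    rwa [norm_of_nonneg (hb_tail k ▸ poissonUpperTail_nonneg (hm k) _)]

open scoped Classical in
theorem statement (a : ℕ → ℝ) (ha_pos : ∀ n, 0 < a n)
    (hna_mono : Monotone (fun n : ℕ => (n : ℝ) * a n))
    (hna_top : Tendsto (fun n : ℕ => (n : ℝ) * a n) atTop atTop)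
    (ha_anti : Antitone a) (ha_lim : Tendsto a atTop (nhds 0))
    (h73 : Tendsto (fun n : ℕ => (n : ℝ) * a n / llog n ^ ((7:ℝ)/3)) atTop atTop)
    (c b : ℕ → ℝ)
    (hc : ∀ k, c k = ∑' l : ℕ,
      if (l : ℝ) < (1 - uk a k) * (vk k : ℝ) * a (nk (k + 1))
        then poissonProb ((vk k : ℝ) * a (nk (k + 1))) l else 0)
    (hb : ∀ k, b k = ∑' l : ℕ,
      if (1 + uk a k) * (vk k : ℝ) * a (nk (k + 1)) < (l : ℝ)
        then poissonProb ((vk k : ℝ) * a (nk (k + 1))) l else 0) :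
    Summable c ∧ Summable b ∧
      ∀ᶠ k : ℕ in atTop, c k ≤ Real.exp (-2 * llog (nk k)) :=
  statement_general a ha_pos h73 c b hc hb
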